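/- arXiv:2403.06029 — 3 statements merged into one kernel-verified Lean document; each statement's English description precedes it below -/
import Mathlib

section
/- Let X and Y be real normed (Banach) spaces, K a nonempty bounded subset of X, ℓ₀ ∈ Y, π₀ : X → Y a bounded linear operator, and F : X → Y a map bounded on K. For the operator π(x) = ℓ₀ + π₀(x) + F(x) and every natural number n, the affine Kolmogorov n-width of the image set π(K) = {π(x) : x ∈ K} in Y satisfies d_n(π(K))_Y ≤ ‖π₀‖ · d_n(K)_X + sup_{x∈K} ‖F(x)‖_Y. -/
/-- Deviation of a set `K` from a set `W`: `sup_{x ∈ K} inf_{ξ ∈ W} ‖x - ξ‖`. -/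
noncomputable def setDeviation {X : Type*} [NormedAddCommGroup X] (K W : Set X) : ℝ :=
  sSup ((fun x => Metric.infDist x W) '' K)

/-- The affine Kolmogorov `n`-width `d_n(K)_X`. -/
noncomputable def affKolWidth {X : Type*} [NormedAddCommGroup X] [NormedSpace ℝ X]
    (n : ℕ) (K : Set X) : ℝ :=
  sInf { r : ℝ | ∃ W : AffineSubspace ℝ X, (W : Set X).Nonempty ∧
    FiniteDimensional ℝ W.direction ∧ Module.finrank ℝ W.direction ≤ n ∧
    r = setDeviation K (W : Set X) }

/-! The affine part `x ↦ ℓ₀ + π₀ x` of `π` is `‖π₀‖`-Lipschitz and maps an affine subspace `W` of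
dimension `≤ n` onto one of dimension `≤ n`; so distances of points of `K` to `W` grow by at most
the factor `‖π₀‖` on the image side, and the perturbation `F` moves each image point by at most
`sup_K ‖F‖`. Taking the infimum over `W` gives the bound. -/

open Metric
open scoped NNReal

theorem LipschitzWith.infDist_image_le {α β : Type*} [PseudoMetricSpace α] [PseudoMetricSpace β]
    {L : ℝ≥0} {f : α → β} (hf : LipschitzWith L f) (x : α) (s : Set α) :
    infDist (f x) (f '' s) ≤ L * infDist x s := by
  rcases s.eq_empty_or_nonempty with rfl | hs
  · simp
  have : Nonempty s := hs.to_subtype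
  rw [infDist_eq_iInf (s := s), Real.mul_iInf_of_nonneg L.coe_nonneg]
  exact le_ciInf fun y =>
    (infDist_le_dist_of_mem (Set.mem_image_of_mem f y.2)).trans (hf.dist_le_mul x y)

section
variable {X : Type*} [NormedAddCommGroup X]

theorem setDeviation_nonneg (K W : Set X) : 0 ≤ setDeviation K W :=
  Real.sSup_nonneg (by rintro _ ⟨x, _, rfl⟩; exact infDist_nonneg)

theorem infDist_le_setDeviation {K : Set X} (hK : Bornology.IsBounded K) (W : Set X) {x : X}
    (hx : x ∈ K) : infDist x W ≤ setDeviation K W :=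
  le_csSup ((lipschitz_infDist_pt W).isBounded_image hK).bddAbove ⟨x, hx, rfl⟩

theorem setDeviation_le {K W : Set X} {b : ℝ} (hb : 0 ≤ b) (h : ∀ x ∈ K, infDist x W ≤ b) :
    setDeviation K W ≤ b :=
  Real.sSup_le (by rintro _ ⟨x, hx, rfl⟩; exact h x hx) hb

end

theorem setDeviation_image_add_le {X Y : Type*} [NormedAddCommGroup X] [NormedAddCommGroup Y]
    {K : Set X} (hK : Bornology.IsBounded K) (W : Set X) {L : ℝ≥0} {f : X → Y}
    (hf : LipschitzWith L f) {g : X → Y} {c : ℝ} (hc : 0 ≤ c) (hg : ∀ x ∈ K, ‖g x‖ ≤ c) :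
    setDeviation ((fun x => f x + g x) '' K) (f '' W) ≤ L * setDeviation K W + c := by
  refine setDeviation_le (by have := setDeviation_nonneg K W; positivity) ?_
  rintro _ ⟨x, hx, rfl⟩
  calc infDist (f x + g x) (f '' W) ≤ infDist (f x) (f '' W) + dist (f x + g x) (f x) :=
        infDist_le_infDist_add_dist
    _ ≤ L * setDeviation K W + c := by
        rw [dist_self_add_left]
        gcongr
        · exact (hf.infDist_image_le x W).trans
            (mul_le_mul_of_nonneg_left (infDist_le_setDeviation hK W hx) L.coe_nonneg)
        · exact hg x hx

section
variable {X : Type*} [NormedAddCommGroup X] [NormedSpace ℝ X]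

theorem affKolWidth_le_setDeviation {n : ℕ} (K : Set X) {W : AffineSubspace ℝ X}
    (hW : (W : Set X).Nonempty) [FiniteDimensional ℝ W.direction]
    (hWn : Module.finrank ℝ W.direction ≤ n) : affKolWidth n K ≤ setDeviation K W :=
  csInf_le ⟨0, by rintro _ ⟨V, -, -, -, rfl⟩; exact setDeviation_nonneg _ _⟩ ⟨W, hW, ‹_›, hWn, rfl⟩

theorem affKolWidth_le_setDeviation_map {Y : Type*} [NormedAddCommGroup Y] [NormedSpace ℝ Y]
    {n : ℕ} (K : Set Y) (f : X →ᵃ[ℝ] Y) {W : AffineSubspace ℝ X}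
    (hW : (W : Set X).Nonempty) [FiniteDimensional ℝ W.direction]
    (hWn : Module.finrank ℝ W.direction ≤ n) : affKolWidth n K ≤ setDeviation K (f '' W) := by
  rw [← AffineSubspace.coe_map]
  have : FiniteDimensional ℝ (W.map f).direction := by
    rw [AffineSubspace.map_direction]; infer_instance
  refine affKolWidth_le_setDeviation K (hW.image f) ?_
  rw [AffineSubspace.map_direction]
  exact (Submodule.finrank_map_le _ _).trans hWn

theorem le_map_affKolWidth_of_forall {n : ℕ} {K : Set X} {a : ℝ} {φ : ℝ → ℝ} (hφ : Monotone φ)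
    (hφc : Continuous φ)
    (h : ∀ W : AffineSubspace ℝ X, (W : Set X).Nonempty → FiniteDimensional ℝ W.direction →
      Module.finrank ℝ W.direction ≤ n → a ≤ φ (setDeviation K W)) :
    a ≤ φ (affKolWidth n K) := by
  have hne : { r : ℝ | ∃ W : AffineSubspace ℝ X, (W : Set X).Nonempty ∧
      FiniteDimensional ℝ W.direction ∧ Module.finrank ℝ W.direction ≤ n ∧
      r = setDeviation K (W : Set X) }.Nonempty :=
    ⟨_, AffineSubspace.mk' 0 ⊥, ⟨0, AffineSubspace.self_mem_mk' _ _⟩,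
      by rw [AffineSubspace.direction_mk']; infer_instance,
      by rw [AffineSubspace.direction_mk', finrank_bot]; exact n.zero_le, rfl⟩
  rw [affKolWidth, hφ.map_csInf_of_continuousAt hφc.continuousAt hne
    ⟨0, by rintro _ ⟨V, -, -, -, rfl⟩; exact setDeviation_nonneg _ _⟩]
  refine le_csInf (hne.image φ) ?_
  rintro _ ⟨_, ⟨W, hW, hfd, hWn, rfl⟩, rfl⟩
  exact h W hW hfd hWn

end

theorem stmt_10_general {X Y : Type*} [NormedAddCommGroup X] [NormedSpace ℝ X]
    [NormedAddCommGroup Y] [NormedSpace ℝ Y]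
    (n : ℕ) (K : Set X) (hKb : Bornology.IsBounded K)
    (ℓ₀ : Y) (π₀ : X →L[ℝ] Y) (F : X → Y)
    (hF : BddAbove ((fun x => ‖F x‖) '' K)) :
    affKolWidth n ((fun x => ℓ₀ + π₀ x + F x) '' K) ≤
      ‖π₀‖ * affKolWidth n K + sSup ((fun x => ‖F x‖) '' K) := by
  set S := sSup ((fun x => ‖F x‖) '' K)
  have hS : 0 ≤ S := Real.sSup_nonneg (by rintro _ ⟨x, _, rfl⟩; positivity)
  let f : X →ᵃ[ℝ] Y := AffineMap.const ℝ X ℓ₀ + π₀.toLinearMap.toAffineMap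
  have hf : LipschitzWith ‖π₀‖₊ f := zero_add ‖π₀‖₊ ▸ (LipschitzWith.const ℓ₀).add π₀.lipschitz
  refine le_map_affKolWidth_of_forall (φ := fun r => ‖π₀‖ * r + S)
    ((monotone_id.const_mul (norm_nonneg _)).add_const S) (by fun_prop) fun W hW _ hWn => ?_
  calc affKolWidth n ((fun x => ℓ₀ + π₀ x + F x) '' K)
      ≤ setDeviation ((fun x => f x + F x) '' K) (f '' W) :=
        affKolWidth_le_setDeviation_map _ f hW hWn
    _ ≤ ‖π₀‖ * setDeviation K W + S :=
        setDeviation_image_add_le hKb W hf hS fun x hx => le_csSup hF ⟨x, hx, rfl⟩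

/-- Theorem 1: for `π(x) = ℓ₀ + π₀(x) + F(x)` with `F` bounded on the nonempty bounded set
`K`, one has `d_n(π(K))_Y ≤ ‖π₀‖ d_n(K)_X + sup_{x ∈ K} ‖F(x)‖_Y`. -/
theorem stmt_10 {X Y : Type*} [NormedAddCommGroup X] [NormedSpace ℝ X] [CompleteSpace X]
    [NormedAddCommGroup Y] [NormedSpace ℝ Y] [CompleteSpace Y]
    (n : ℕ) (K : Set X) (hKne : K.Nonempty) (hKb : Bornology.IsBounded K)
    (ℓ₀ : Y) (π₀ : X →L[ℝ] Y) (F : X → Y)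
    (hF : BddAbove ((fun x => ‖F x‖) '' K)) :
    affKolWidth n ((fun x => ℓ₀ + π₀ x + F x) '' K) ≤
      ‖π₀‖ * affKolWidth n K + sSup ((fun x => ‖F x‖) '' K) :=
  stmt_10_general n K hKb ℓ₀ π₀ F hF
end

section
/- Let X and Y be real normed (Banach) spaces, K a nonempty bounded subset of X with 0 ∈ K, ℓ₀ ∈ Y, π₀ : X → Y a bounded linear operator, and F : X → Y a map with F(0) = 0 that satisfies the Lipschitz condition on K with constant μ ≥ 0, i.e., ‖F(x') − F(x'')‖_Y ≤ μ‖x' − x''‖_X for all x', x'' ∈ K. For the operator π(x) = ℓ₀ + π₀(x) + F(x) and every natural number n, d_n(π(K))_Y ≤ ‖π₀‖ · d_n(K)_X + μ · sup_{x∈K} ‖x‖_X. -/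
/-- Remark after Theorem 1: if `0 ∈ K`, `F(0) = 0` and `F` is `μ`-Lipschitz on `K`, then for
`π(x) = ℓ₀ + π₀(x) + F(x)` one has
`d_n(π(K))_Y ≤ ‖π₀‖ d_n(K)_X + μ · sup_{x ∈ K} ‖x‖_X`. -/
theorem stmt_11 {X Y : Type*} [NormedAddCommGroup X] [NormedSpace ℝ X] [CompleteSpace X]
    [NormedAddCommGroup Y] [NormedSpace ℝ Y] [CompleteSpace Y]
    (n : ℕ) (K : Set X) (hKne : K.Nonempty) (hKb : Bornology.IsBounded K) (h0K : (0 : X) ∈ K)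
    (ℓ₀ : Y) (π₀ : X →L[ℝ] Y) (F : X → Y) (hF0 : F 0 = 0) (μ : ℝ) (hμ : 0 ≤ μ)
    (hLip : ∀ x' ∈ K, ∀ x'' ∈ K, ‖F x' - F x''‖ ≤ μ * ‖x' - x''‖) :
    affKolWidth n ((fun x => ℓ₀ + π₀ x + F x) '' K) ≤
      ‖π₀‖ * affKolWidth n K + μ * sSup ((fun x => ‖x‖) '' K) := by
  classical
  set π : X → Y := fun x => ℓ₀ + π₀ x + F x with hπ
  set M : ℝ := sSup ((fun x => ‖x‖) '' K) with hM
  have hMbdd : BddAbove ((fun x => ‖x‖) '' K) := by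
    obtain ⟨C, hC⟩ := hKb.exists_norm_le
    exact ⟨C, by rintro _ ⟨x, hx, rfl⟩; exact hC x hx⟩
  have hMle : ∀ x ∈ K, ‖x‖ ≤ M := fun x hx => le_csSup hMbdd ⟨x, hx, rfl⟩
  have hM0 : 0 ≤ M := le_trans (norm_nonneg (0:X)) (hMle 0 h0K)
  have hFle : ∀ x ∈ K, ‖F x‖ ≤ μ * M := by
    intro x hx
    have := hLip x hx 0 h0K
    simp only [hF0, sub_zero] at this
    exact this.trans (mul_le_mul_of_nonneg_left (hMle x hx) hμ)
  -- the affine map x ↦ ℓ₀ + π₀ x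
  set f : X →ᵃ[ℝ] Y := ⟨fun x => ℓ₀ + π₀ x, π₀.toLinearMap, by
    intro p v
    simp [vadd_eq_add, map_add]
    abel⟩ with hf
  have hfapp : ∀ x, f x = ℓ₀ + π₀ x := fun x => rfl
  -- the set S for K
  set S : Set ℝ := { r : ℝ | ∃ W : AffineSubspace ℝ X, (W : Set X).Nonempty ∧
    FiniteDimensional ℝ W.direction ∧ Module.finrank ℝ W.direction ≤ n ∧
    r = setDeviation K (W : Set X) } with hS
  have hSne : S.Nonempty := by
    refine ⟨setDeviation K (affineSpan ℝ ({0} : Set X) : Set X),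
      affineSpan ℝ ({0} : Set X), ⟨0, subset_affineSpan ℝ _ rfl⟩, ?_, ?_, rfl⟩
    · rw [direction_affineSpan, vectorSpan_singleton]; infer_instance
    · rw [direction_affineSpan, vectorSpan_singleton]; simp
  -- deviations are nonneg, so the target sInf set is bounded below by 0
  have hdevnn : ∀ (K' W' : Set Y), 0 ≤ setDeviation K' W' := by
    intro K' W'
    exact Real.sSup_nonneg (by rintro _ ⟨x, hx, rfl⟩; exact Metric.infDist_nonneg)
  have hTbdd : BddBelow { r : ℝ | ∃ W : AffineSubspace ℝ Y, (W : Set Y).Nonempty ∧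
      FiniteDimensional ℝ W.direction ∧ Module.finrank ℝ W.direction ≤ n ∧
      r = setDeviation (π '' K) (W : Set Y) } := by
    refine ⟨0, ?_⟩
    rintro r ⟨W, -, -, -, rfl⟩
    exact hdevnn _ _
  -- main estimate: for each admissible W for K, we get an admissible W' for π '' K
  have key : ∀ r ∈ S, affKolWidth n (π '' K) ≤ ‖π₀‖ * r + μ * M := by
    rintro r ⟨W, ⟨ξ₀, hξ₀⟩, hWfd, hWrk, rfl⟩
    set W' : AffineSubspace ℝ Y := W.map f with hW'
    have hW'ne : (W' : Set Y).Nonempty := ⟨f ξ₀, Set.mem_image_of_mem _ hξ₀⟩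
    have hdir : W'.direction = W.direction.map π₀.toLinearMap :=
      AffineSubspace.map_direction f W
    have hW'fd : FiniteDimensional ℝ W'.direction := by
      rw [hdir]; exact Module.Finite.map _ _
    have hW'rk : Module.finrank ℝ W'.direction ≤ n := by
      rw [hdir]
      exact (Submodule.finrank_map_le _ _).trans hWrk
    -- bound infDist for each x ∈ K
    have hinf : ∀ x ∈ K, Metric.infDist (π x) (W' : Set Y) ≤
        ‖π₀‖ * Metric.infDist x (W : Set X) + μ * M := by
      intro x hx
      refine le_of_forall_pos_le_add ?_
      intro ε hε
      have hδ : (0 : ℝ) < ε / (‖π₀‖ + 1) := by positivity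
      obtain ⟨ξ, hξW, hξ⟩ := (Metric.infDist_lt_iff ⟨ξ₀, hξ₀⟩).1
        (lt_add_of_pos_right (Metric.infDist x (W : Set X)) hδ)
      have h1 : Metric.infDist (π x) (W' : Set Y) ≤ dist (π x) (f ξ) :=
        Metric.infDist_le_dist_of_mem (Set.mem_image_of_mem _ hξW)
      have h2 : dist (π x) (f ξ) ≤ ‖π₀‖ * dist x ξ + μ * M := by
        rw [dist_eq_norm, hfapp]
        have : π x - (ℓ₀ + π₀ ξ) = π₀ (x - ξ) + F x := by
          simp [hπ, map_sub]; abel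
        rw [this]
        calc ‖π₀ (x - ξ) + F x‖ ≤ ‖π₀ (x - ξ)‖ + ‖F x‖ := norm_add_le _ _
          _ ≤ ‖π₀‖ * ‖x - ξ‖ + μ * M :=
            add_le_add (π₀.le_opNorm _) (hFle x hx)
          _ = ‖π₀‖ * dist x ξ + μ * M := by rw [dist_eq_norm]
      have h3 : ‖π₀‖ * dist x ξ ≤ ‖π₀‖ * (Metric.infDist x (W : Set X) + ε / (‖π₀‖ + 1)) :=
        mul_le_mul_of_nonneg_left hξ.le (norm_nonneg _)
      have h4 : ‖π₀‖ * (ε / (‖π₀‖ + 1)) ≤ ε := by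
        rw [mul_div_assoc', div_le_iff₀ (by positivity)]
        nlinarith [norm_nonneg π₀]
      calc Metric.infDist (π x) (W' : Set Y) ≤ ‖π₀‖ * dist x ξ + μ * M := h1.trans h2
        _ ≤ ‖π₀‖ * Metric.infDist x (W : Set X) + ‖π₀‖ * (ε / (‖π₀‖ + 1)) + μ * M := by
            rw [mul_add] at h3; linarith
        _ ≤ ‖π₀‖ * Metric.infDist x (W : Set X) + μ * M + ε := by linarith
    -- infDist x W ≤ setDeviation K W
    have hbddW : BddAbove ((fun x => Metric.infDist x (W : Set X)) '' K) := by
      refine ⟨M + ‖ξ₀‖, ?_⟩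
      rintro _ ⟨x, hx, rfl⟩
      refine (Metric.infDist_le_dist_of_mem hξ₀).trans ?_
      rw [dist_eq_norm]
      calc ‖x - ξ₀‖ ≤ ‖x‖ + ‖ξ₀‖ := norm_sub_le _ _
        _ ≤ M + ‖ξ₀‖ := by linarith [hMle x hx]
    have hdev : setDeviation (π '' K) (W' : Set Y) ≤
        ‖π₀‖ * setDeviation K (W : Set X) + μ * M := by
      refine Real.sSup_le ?_ (add_nonneg (mul_nonneg (norm_nonneg _)
        (Real.sSup_nonneg (by rintro _ ⟨x, hx, rfl⟩; exact Metric.infDist_nonneg)))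
        (mul_nonneg hμ hM0))
      · rintro _ ⟨_, ⟨x, hx, rfl⟩, rfl⟩
        refine (hinf x hx).trans ?_
        have : Metric.infDist x (W : Set X) ≤ setDeviation K (W : Set X) :=
          le_csSup hbddW ⟨x, hx, rfl⟩
        nlinarith [norm_nonneg π₀]
    refine le_trans ?_ hdev
    exact csInf_le hTbdd ⟨W', hW'ne, hW'fd, hW'rk, rfl⟩
  -- conclude
  refine le_of_forall_pos_le_add ?_
  intro ε hε
  have hδ : (0 : ℝ) < ε / (‖π₀‖ + 1) := by positivity
  obtain ⟨r, hrS, hr⟩ := Real.lt_sInf_add_pos hSne hδ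
  have h1 := key r hrS
  have h2 : ‖π₀‖ * r ≤ ‖π₀‖ * (sInf S + ε / (‖π₀‖ + 1)) :=
    mul_le_mul_of_nonneg_left hr.le (norm_nonneg _)
  have h4 : ‖π₀‖ * (ε / (‖π₀‖ + 1)) ≤ ε := by
    rw [mul_div_assoc', div_le_iff₀ (by positivity)]
    nlinarith [norm_nonneg π₀]
  have : affKolWidth n K = sInf S := rfl
  rw [mul_add] at h2
  rw [this]
  linarith
end

section
/- Let H be a real or complex Banach space, M ≥ 1 and ω ∈ ℝ constants, and S : [0,∞) → B(H) a strongly continuous family of bounded linear operators on H with ‖S(t)‖ ≤ M·e^{ωt} for all t ≥ 0. Let B : H → H be a bounded linear operator, x₀ ∈ H, t > 0, and u ∈ L²(0,t). Then for every k ≥ 1 the Volterra term V_k(t;u) = ∫₀^t ∫₀^{σ_k} ⋯ ∫₀^{σ₂} S(t−σ_k) B S(σ_k−σ_{k−1}) B ⋯ B S(σ₁) x₀ · u(σ₁) ⋯ u(σ_k) dσ₁ ⋯ dσ_k satisfies ‖V_k(t;u)‖ ≤ M · e^{ωt} · ‖x₀‖ · (M · ‖B‖ · √t · ‖u‖_{L²(0,t)})^k.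 -/
/-!
Each propagator `S(σ_{j+1} − σ_j)` costs at most `M e^{ω(σ_{j+1} − σ_j)}` and these exponents
telescope to `e^{ωt}`, so on the simplex the kernel is bounded by `M e^{ωt} ‖x₀‖ (M ‖B‖)^k`.
Enlarging the simplex to the cube `[0,t]^k`, Fubini factors the integral of `∏ |u(σᵢ)|` into
`(∫₀ᵗ |u|)^k`, and Cauchy–Schwarz gives `∫₀ᵗ |u| ≤ √t ‖u‖_{L²(0,t)}`.
-/

open MeasureTheory

/-- The pair consisting of `B S(σ_k − σ_{k−1}) B ⋯ B S(σ₁) x₀` together with the last time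
`σ_k` (for `k = 0`, the pair `(x₀, 0)`). -/
noncomputable def volterraChain {𝕜 H : Type*} [RCLike 𝕜] [NormedAddCommGroup H]
    [NormedSpace 𝕜 H] (S : ℝ → H →L[𝕜] H) (B : H →L[𝕜] H) (x₀ : H) :
    (k : ℕ) → (Fin k → ℝ) → H × ℝ
  | 0, _ => (x₀, 0)
  | k + 1, σ =>
    let p := volterraChain S B x₀ k (σ ∘ Fin.castSucc)
    (B (S (σ (Fin.last k) - p.2) p.1), σ (Fin.last k))

/-- The Volterra kernel `w_k(t, σ₁, …, σ_k) = S(t − σ_k) B S(σ_k − σ_{k−1}) B ⋯ B S(σ₁) x₀`. -/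
noncomputable def volterraKernel {𝕜 H : Type*} [RCLike 𝕜] [NormedAddCommGroup H]
    [NormedSpace 𝕜 H] (S : ℝ → H →L[𝕜] H) (B : H →L[𝕜] H) (x₀ : H)
    (t : ℝ) (k : ℕ) (σ : Fin k → ℝ) : H :=
  S (t - (volterraChain S B x₀ k σ).2) (volterraChain S B x₀ k σ).1

/-- The ordered simplex `{(σ₁, …, σ_k) : 0 ≤ σ₁ ≤ σ₂ ≤ ⋯ ≤ σ_k ≤ t}`. -/
def orderedSimplex (k : ℕ) (t : ℝ) : Set (Fin k → ℝ) :=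
  {σ | Monotone σ ∧ ∀ i, σ i ∈ Set.Icc (0 : ℝ) t}

/-- The `k`-th Volterra term
`V_k(t;u) = ∫…∫_{0 ≤ σ₁ ≤ ⋯ ≤ σ_k ≤ t} w_k(t,σ₁,…,σ_k) u(σ₁) ⋯ u(σ_k) dσ₁ ⋯ dσ_k`. -/
noncomputable def volterraTerm {𝕜 H : Type*} [RCLike 𝕜] [NormedAddCommGroup H]
    [NormedSpace 𝕜 H] [NormedSpace ℝ H] (S : ℝ → H →L[𝕜] H) (B : H →L[𝕜] H) (x₀ : H)
    (t : ℝ) (u : ℝ → ℝ) (k : ℕ) : H :=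
  ∫ σ in orderedSimplex k t, (∏ i, u (σ i)) • volterraKernel S B x₀ t k σ

/-- The `L²` norm of `u` on `(0, t)`. -/
noncomputable def L2NormOn (u : ℝ → ℝ) (t : ℝ) : ℝ :=
  (∫ σ in Set.Ioc (0 : ℝ) t, (u σ) ^ 2) ^ (1 / 2 : ℝ)

open Set

lemma measurableSet_orderedSimplex (k : ℕ) (t : ℝ) :
    MeasurableSet (orderedSimplex k t) := by
  simp only [orderedSimplex, Monotone, ofPred_and, ofPred_forall]
  exact .inter
    (.iInter fun i => .iInter fun j => .iInter fun _ =>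
      measurableSet_le (measurable_pi_apply i) (measurable_pi_apply j))
    (.iInter fun i => measurable_pi_apply i measurableSet_Icc)

lemma orderedSimplex_subset_pi (k : ℕ) (t : ℝ) :
    orderedSimplex k t ⊆ univ.pi fun _ => Icc 0 t :=
  fun _ hσ i _ => hσ.2 i

lemma comp_castSucc_mem_orderedSimplex {k : ℕ} {t : ℝ} {σ : Fin (k + 1) → ℝ}
    (hσ : σ ∈ orderedSimplex (k + 1) t) :
    σ ∘ Fin.castSucc ∈ orderedSimplex k (σ (Fin.last k)) :=
  ⟨hσ.1.comp Fin.strictMono_castSucc.monotone,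
    fun _ => ⟨(hσ.2 _).1, hσ.1 (Fin.le_last _)⟩⟩

section VolterraChain

variable {𝕜 H : Type*} [RCLike 𝕜] [NormedAddCommGroup H] [NormedSpace 𝕜 H]
  {S : ℝ → H →L[𝕜] H} {M ω : ℝ}

lemma volterraChain_snd_mem_Icc (B : H →L[𝕜] H) (x₀ : H) {k : ℕ} {t : ℝ} (ht : 0 ≤ t)
    {σ : Fin k → ℝ} (hσ : σ ∈ orderedSimplex k t) :
    (volterraChain S B x₀ k σ).2 ∈ Icc 0 t := by
  cases k with
  | zero => exact ⟨le_rfl, ht⟩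
  | succ k => exact hσ.2 (Fin.last k)

lemma norm_apply_sub_le (hS : ∀ s : ℝ, 0 ≤ s → ‖S s‖ ≤ M * Real.exp (ω * s))
    {a b : ℝ} (hab : a ≤ b) {y : H} {C : ℝ} (hy : ‖y‖ ≤ C * Real.exp (ω * a)) :
    ‖S (b - a) y‖ ≤ M * C * Real.exp (ω * b) := by
  have hSba := hS (b - a) (sub_nonneg.2 hab)
  calc ‖S (b - a) y‖ ≤ ‖S (b - a)‖ * ‖y‖ := (S _).le_opNorm y
    _ ≤ M * Real.exp (ω * (b - a)) * (C * Real.exp (ω * a)) :=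
        mul_le_mul hSba hy (norm_nonneg y) ((norm_nonneg _).trans hSba)
    _ = M * C * Real.exp (ω * b) := by
        rw [show ω * b = ω * (b - a) + ω * a by ring, Real.exp_add]; ring

lemma norm_volterraChain_fst_le (hS : ∀ s : ℝ, 0 ≤ s → ‖S s‖ ≤ M * Real.exp (ω * s))
    (B : H →L[𝕜] H) (x₀ : H) {k : ℕ} {t : ℝ} {σ : Fin k → ℝ}
    (hσ : σ ∈ orderedSimplex k t) :
    ‖(volterraChain S B x₀ k σ).1‖ ≤
      (M * ‖B‖) ^ k * ‖x₀‖ * Real.exp (ω * (volterraChain S B x₀ k σ).2) := by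
  induction k generalizing t with
  | zero => simp [volterraChain]
  | succ k ih =>
    have hσ' := comp_castSucc_mem_orderedSimplex hσ
    set p := volterraChain S B x₀ k (σ ∘ Fin.castSucc)
    have hp : p.2 ≤ σ (Fin.last k) := (volterraChain_snd_mem_Icc B x₀ (hσ.2 _).1 hσ').2
    calc ‖B (S (σ (Fin.last k) - p.2) p.1)‖
        ≤ ‖B‖ * ‖S (σ (Fin.last k) - p.2) p.1‖ := B.le_opNorm _
      _ ≤ ‖B‖ * (M * ((M * ‖B‖) ^ k * ‖x₀‖) * Real.exp (ω * σ (Fin.last k))) := by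
          gcongr; exact norm_apply_sub_le hS hp (ih hσ')
      _ = (M * ‖B‖) ^ (k + 1) * ‖x₀‖ * Real.exp (ω * σ (Fin.last k)) := by ring

lemma norm_volterraKernel_le (hS : ∀ s : ℝ, 0 ≤ s → ‖S s‖ ≤ M * Real.exp (ω * s))
    (B : H →L[𝕜] H) (x₀ : H) {k : ℕ} {t : ℝ} (ht : 0 ≤ t) {σ : Fin k → ℝ}
    (hσ : σ ∈ orderedSimplex k t) :
    ‖volterraKernel S B x₀ t k σ‖ ≤ M * ((M * ‖B‖) ^ k * ‖x₀‖) * Real.exp (ω * t) :=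
  norm_apply_sub_le hS (volterraChain_snd_mem_Icc B x₀ ht hσ).2
    (norm_volterraChain_fst_le hS B x₀ hσ)

end VolterraChain

lemma norm_setIntegral_prod_smul_le {ι α E : Type*} [Fintype ι] [MeasurableSpace α]
    {μ : Measure α} [SigmaFinite μ] [NormedAddCommGroup E] [NormedSpace ℝ E]
    {s : Set (ι → α)} {I : Set α} (hs : MeasurableSet s) (hsI : s ⊆ univ.pi fun _ => I)
    {u : α → ℝ} (hu : IntegrableOn u I μ) {f : (ι → α) → E} {C : ℝ} (hC : 0 ≤ C)
    (hf : ∀ σ ∈ s, ‖f σ‖ ≤ C) :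
    ‖∫ σ in s, (∏ i, u (σ i)) • f σ ∂Measure.pi fun _ => μ‖ ≤
      C * (∫ x in I, |u x| ∂μ) ^ Fintype.card ι := by
  have hint : IntegrableOn (fun σ : ι → α => C * ∏ i, |u (σ i)|) (univ.pi fun _ => I)
      (Measure.pi fun _ => μ) := by
    rw [IntegrableOn, Measure.restrict_pi_pi]
    exact (Integrable.fintype_prod (f := fun _ => fun x => |u x|) fun _ => hu.abs).const_mul C
  have hnonneg : ∀ σ : ι → α, 0 ≤ C * ∏ i, |u (σ i)| := fun σ => by positivity
  calc ‖∫ σ in s, (∏ i, u (σ i)) • f σ ∂Measure.pi fun _ => μ‖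
      ≤ ∫ σ in s, ‖(∏ i, u (σ i)) • f σ‖ ∂Measure.pi fun _ => μ :=
        norm_integral_le_integral_norm _
    _ ≤ ∫ σ in s, C * ∏ i, |u (σ i)| ∂Measure.pi fun _ => μ := by
        refine integral_mono_of_nonneg (.of_forall fun _ => norm_nonneg _)
          (hint.mono_set hsI) ?_
        filter_upwards [ae_restrict_mem hs] with σ hσ
        rw [norm_smul, Real.norm_eq_abs, Finset.abs_prod, mul_comm C]
        exact mul_le_mul_of_nonneg_left (hf σ hσ) (by positivity)
    _ ≤ ∫ σ in univ.pi fun _ => I, C * ∏ i, |u (σ i)| ∂Measure.pi fun _ => μ :=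
        setIntegral_mono_set hint (.of_forall hnonneg) hsI.eventuallyLE
    _ = C * (∫ x in I, |u x| ∂μ) ^ Fintype.card ι := by
        rw [Measure.restrict_pi_pi, integral_const_mul,
          integral_fintype_prod_eq_pow (fun x => |u x|)]

/-- Cauchy–Schwarz against the constant function `1`. -/
lemma integral_abs_le_sqrt_mul_L2NormOn {u : ℝ → ℝ} {t : ℝ} (ht : 0 ≤ t)
    (hu : MemLp u 2 (volume.restrict (Ioc 0 t))) :
    ∫ s in Ioc 0 t, |u s| ≤ Real.sqrt t * L2NormOn u t := by
  have h := integral_mul_le_Lp_mul_Lq_of_nonneg (μ := volume.restrict (Ioc 0 t))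
    Real.HolderConjugate.two_two (f := fun _ => 1) (g := |u|)
    (.of_forall fun _ => zero_le_one) (.of_forall fun _ => abs_nonneg _)
    (memLp_const 1) (by simpa using hu.abs)
  simpa [L2NormOn, Real.sqrt_eq_rpow, ht] using h

theorem stmt_15_general {𝕜 H : Type*} [RCLike 𝕜] [NormedAddCommGroup H] [NormedSpace 𝕜 H]
    [NormedSpace ℝ H]
    (M ω : ℝ) (S : ℝ → H →L[𝕜] H)
    (hS : ∀ s : ℝ, 0 ≤ s → ‖S s‖ ≤ M * Real.exp (ω * s))
    (B : H →L[𝕜] H) (x₀ : H) (t : ℝ) (ht : 0 < t) (u : ℝ → ℝ)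
    (hu : MemLp u 2 (volume.restrict (Set.Ioc (0 : ℝ) t)))
    (k : ℕ) :
    ‖volterraTerm S B x₀ t u k‖ ≤
      M * Real.exp (ω * t) * ‖x₀‖ *
        (M * ‖B‖ * Real.sqrt t * L2NormOn u t) ^ k := by
  have hM₀ : 0 ≤ M := by simpa using (norm_nonneg _).trans (hS 0 le_rfl)
  have huIcc : IntegrableOn u (Icc 0 t) :=
    (integrableOn_Icc_iff_integrableOn_Ioc).2 (hu.integrable one_le_two)
  calc ‖volterraTerm S B x₀ t u k‖
      ≤ M * ((M * ‖B‖) ^ k * ‖x₀‖) * Real.exp (ω * t) * (∫ s in Icc 0 t, |u s|) ^ k := by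
        have h := norm_setIntegral_prod_smul_le (measurableSet_orderedSimplex k t)
          (orderedSimplex_subset_pi k t) huIcc (by positivity)
          fun σ hσ => norm_volterraKernel_le hS B x₀ ht.le hσ
        rwa [Fintype.card_fin] at h
    _ ≤ M * ((M * ‖B‖) ^ k * ‖x₀‖) * Real.exp (ω * t) * (Real.sqrt t * L2NormOn u t) ^ k := by
        rw [integral_Icc_eq_integral_Ioc]
        gcongr
        exact integral_abs_le_sqrt_mul_L2NormOn ht.le hu
    _ = M * Real.exp (ω * t) * ‖x₀‖ * (M * ‖B‖ * Real.sqrt t * L2NormOn u t) ^ k := by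
        ring

/-- The Volterra term bound
`‖V_k(t;u)‖ ≤ M e^{ωt} ‖x₀‖ (M ‖B‖ √t ‖u‖_{L²(0,t)})^k`. -/
theorem stmt_15 {𝕜 H : Type*} [RCLike 𝕜] [NormedAddCommGroup H] [NormedSpace 𝕜 H]
    [NormedSpace ℝ H] [IsScalarTower ℝ 𝕜 H] [CompleteSpace H]
    (M ω : ℝ) (hM : 1 ≤ M) (S : ℝ → H →L[𝕜] H)
    (hScont : ∀ x : H, ContinuousOn (fun s => S s x) (Set.Ici (0 : ℝ)))
    (hS : ∀ s : ℝ, 0 ≤ s → ‖S s‖ ≤ M * Real.exp (ω * s))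
    (B : H →L[𝕜] H) (x₀ : H) (t : ℝ) (ht : 0 < t) (u : ℝ → ℝ)
    (hu : MemLp u 2 (volume.restrict (Set.Ioc (0 : ℝ) t)))
    (k : ℕ) (hk : 1 ≤ k) :
    ‖volterraTerm S B x₀ t u k‖ ≤
      M * Real.exp (ω * t) * ‖x₀‖ *
        (M * ‖B‖ * Real.sqrt t * L2NormOn u t) ^ k :=
  stmt_15_general M ω S hS B x₀ t ht u hu k
end
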